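/- arXiv:0808.0277 — 2 statements merged into one kernel-verified Lean document; each statement's English description precedes it below -/
import Mathlib

section
/- Let G be a free group with basis g₁, …, g_n, let H be a free group, and let φ, ψ : G → H be homomorphisms. If the homomorphism φ ∗ ψ : G ∗ G → H has remnant, then the equalizer subgroup Eq(φ, ψ) = { g ∈ G : φ(g) = ψ(g) } is trivial. -/
/-! Basic definitions: cancellation in products of reduced words, remnant
of a homomorphism of free groups, and assorted constructions. -/

open FreeGroup

/-- `bpow w e` is `w` if `e = true` (exponent `+1`) and `w⁻¹` if `e = false`
(exponent `-1`). -/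
def bpow {β : Type*} (w : FreeGroup β) (e : Bool) : FreeGroup β := if e then w else w⁻¹

/-- The number of letters cancelled between `a` and `b` when the product `a * b`
is brought to reduced form: `(|a| + |b| - |a * b|) / 2`. -/
def cancel {β : Type*} [DecidableEq β] (a b : FreeGroup β) : ℕ :=
  (FreeGroup.norm a + FreeGroup.norm b - FreeGroup.norm (a * b)) / 2

/-- The maximal number of letters of the reduced word `η(gᵢ)` cancelled on its left
in a product `η(gⱼ)^ε * η(gᵢ)`, over all `j` and `ε = ±1` except `j = i, ε = -1`. -/
def maxLeftCancel {α β : Type*} [Fintype α] [DecidableEq α] [DecidableEq β]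
    (η : FreeGroup α →* FreeGroup β) (i : α) : ℕ :=
  (Finset.univ.filter fun je : α × Bool => je ≠ (i, false)).sup
    fun je => cancel (bpow (η (FreeGroup.of je.1)) je.2) (η (FreeGroup.of i))

/-- The maximal number of letters of the reduced word `η(gᵢ)` cancelled on its right
in a product `η(gᵢ) * η(gⱼ)^ε`, over all `j` and `ε = ±1` except `j = i, ε = -1`. -/
def maxRightCancel {α β : Type*} [Fintype α] [DecidableEq α] [DecidableEq β]
    (η : FreeGroup α →* FreeGroup β) (i : α) : ℕ :=
  (Finset.univ.filter fun je : α × Bool => je ≠ (i, false)).sup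
    fun je => cancel (η (FreeGroup.of i)) (bpow (η (FreeGroup.of je.1)) je.2)

/-- `η` has remnant: for each generator `gᵢ`, the maximal left cancellation plus the
maximal right cancellation is strictly less than the length of `η(gᵢ)`, so a nonempty
middle subword (the remnant `Rem_η(gᵢ)`) always survives. -/
def HasRemnant {α β : Type*} [Fintype α] [DecidableEq α] [DecidableEq β]
    (η : FreeGroup α →* FreeGroup β) : Prop :=
  ∀ i : α, maxLeftCancel η i + maxRightCancel η i < FreeGroup.norm (η (FreeGroup.of i))

/-- The length `|Rem_η(gᵢ)|` of the remnant word of `gᵢ`: the part of `η(gᵢ)` surviving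
all maximal cancellations. -/
def remnantLength {α β : Type*} [Fintype α] [DecidableEq α] [DecidableEq β]
    (η : FreeGroup α →* FreeGroup β) (i : α) : ℕ :=
  FreeGroup.norm (η (FreeGroup.of i)) - maxLeftCancel η i - maxRightCancel η i

/-- The remnant `Rem_η(gᵢ)` occupies positions `[maxLeftCancel η i, |η(gᵢ)| - maxRightCancel η i)`
of the reduced word `η(gᵢ)`.  It does not fully cancel in the reduced form of the product
`η(gᵢ) * w` iff the number of letters cancelled from the right end of `η(gᵢ)`, namely
`cancel (η(gᵢ)) w`, leaves some remnant letter alive. -/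
def remnantSurvivesRightMul {α β : Type*} [Fintype α] [DecidableEq α] [DecidableEq β]
    (η : FreeGroup α →* FreeGroup β) (i : α) (w : FreeGroup β) : Prop :=
  cancel (η (FreeGroup.of i)) w + maxLeftCancel η i < FreeGroup.norm (η (FreeGroup.of i))

/-- The remnant `Rem_η(gᵢ)` does not fully cancel in the reduced form of the
product `w * η(gᵢ)`. -/
def remnantSurvivesLeftMul {α β : Type*} [Fintype α] [DecidableEq α] [DecidableEq β]
    (η : FreeGroup α →* FreeGroup β) (i : α) (w : FreeGroup β) : Prop :=
  cancel w (η (FreeGroup.of i)) + maxRightCancel η i < FreeGroup.norm (η (FreeGroup.of i))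

/-- The homomorphism `φ ∗ ψ : G ∗ G → H` on the free product `G ∗ G`, realized as the
free group on `α ⊕ α`, sending the generators of the first factor via `φ` and those of
the second factor via `ψ`. -/
def prodHom {α β : Type*} (φ ψ : FreeGroup α →* FreeGroup β) :
    FreeGroup (α ⊕ α) →* FreeGroup β :=
  FreeGroup.lift (Sum.elim (fun i => φ (FreeGroup.of i)) (fun i => ψ (FreeGroup.of i)))

/-- `φ^v : g ↦ v⁻¹ φ(g) v`. -/
def conjHom {G H : Type*} [Group G] [Group H] (φ : G →* H) (v : H) : G →* H :=
  ((MulAut.conj v⁻¹).toMonoidHom).comp φ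

/-- The equalizer subgroup `Eq(φ, ψ) = {g : φ g = ψ g}`. -/
def eqSubgroup {G H : Type*} [Group G] [Group H] (φ ψ : G →* H) : Subgroup G where
  carrier := {g | φ g = ψ g}
  one_mem' := by simp
  mul_mem' := by
    intro a b ha hb
    simp only [Set.mem_setOf_eq] at *
    rw [_root_.map_mul, _root_.map_mul, ha, hb]
  inv_mem' := by
    intro a ha
    simp only [Set.mem_setOf_eq] at *
    rw [_root_.map_inv, _root_.map_inv, ha]

/-!
If `η` has remnant, then for every reduced word `w x` with last letter `x` the reduced form of
`η (w x)` ends with a suffix of `η x` longer than the right cancellation bound of `x`, i.e. one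
that contains the remnant of `x`. When a letter `y` is appended, the cancellation between
`η (w x)` and `η y` stays inside that suffix, so it is at most the cancellation between `η x` and
`η y`, which the maximal cancellations bound; hence the remnant of `y` survives as well, and `η`
is injective. Applied to `η = φ ∗ ψ`, which identifies the two copies `g` and `g′` in `G ∗ G` of
any `g ∈ Eq(φ, ψ)`, injectivity forces `g = 1`.
-/

namespace FreeGroup

variable {α : Type*}

theorem invRev_prefix_of_suffix_invRev {S C : List (α × Bool)} (h : S <:+ invRev C) :
    invRev S <+: C := by
  obtain ⟨U, hU⟩ := h
  exact ⟨invRev U, by rw [← invRev_append, hU, invRev_invRev]⟩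

theorem eq_one_of_map_inl_eq_map_inr {γ : Type*} {g : FreeGroup α} {g' : FreeGroup γ}
    (h : map Sum.inl g = map Sum.inr g') : g = 1 := by
  let proj : FreeGroup (α ⊕ γ) →* FreeGroup α := lift (Sum.elim of 1)
  have hinl : proj.comp (map Sum.inl) = MonoidHom.id _ := ext_hom _ _ fun a => by simp [proj]
  have hinr : proj.comp (map Sum.inr) = 1 := ext_hom _ _ fun a => by simp [proj]
  have := congrArg proj h
  rwa [← MonoidHom.comp_apply, ← MonoidHom.comp_apply, hinl, hinr] at this

variable [DecidableEq α]

theorem IsReduced.exists_reduce_append_eq {L M : List (α × Bool)} (hL : IsReduced L)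
    (hM : IsReduced M) :
    ∃ L₁ C M₁, L = L₁ ++ invRev C ∧ M = C ++ M₁ ∧ reduce (L ++ M) = L₁ ++ M₁ := by
  induction M generalizing L with
  | nil => exact ⟨L, [], [], by simp [invRev], rfl, by simpa using hL.reduce_eq⟩
  | cons x M ih =>
    by_cases hcancel : ∃ L', L = L' ++ [(x.1, !x.2)]
    · obtain ⟨L', rfl⟩ := hcancel
      have hstep : Red.Step (L' ++ [(x.1, !x.2)] ++ x :: M) (L' ++ M) := by
        simpa using Red.Step.not (L₁ := L') (L₂ := M) (x := x.1) (b := !x.2)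
      obtain ⟨L₁, C, M₁, rfl, rfl, hred⟩ :=
        ih (hL.infix (List.prefix_append _ _).isInfix) (hM.infix (List.suffix_cons _ _).isInfix)
      refine ⟨L₁, x :: C, M₁, by simp [invRev], rfl, ?_⟩
      rw [reduce.Step.eq hstep, hred]
    · refine ⟨L, [], x :: M, by simp [invRev], rfl, IsReduced.reduce_eq ?_⟩
      refine List.isChain_append.mpr ⟨hL, hM, fun a ha b hb hab => ?_⟩
      obtain rfl : x = b := by simpa using hb
      by_contra hne
      obtain rfl : a = (x.1, !x.2) := Prod.ext hab (Bool.eq_not_of_ne hne)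
      exact hcancel ⟨L.dropLast, (List.dropLast_append_getLast? _ ha).symm⟩

theorem exists_toWord_mul_eq (x y : FreeGroup α) :
    ∃ L C M, x.toWord = L ++ invRev C ∧ y.toWord = C ++ M ∧ (x * y).toWord = L ++ M := by
  rw [toWord_mul]
  exact isReduced_toWord.exists_reduce_append_eq isReduced_toWord

end FreeGroup

section Cancel

variable {α : Type*} [DecidableEq α]

theorem cancel_inv_inv (a b : FreeGroup α) : cancel b⁻¹ a⁻¹ = cancel a b := by
  simp only [cancel, ← mul_inv_rev, norm_inv_eq, Nat.add_comm]

theorem cancel_eq_length {x y : FreeGroup α} {L C M : List (α × Bool)}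
    (hx : x.toWord = L ++ invRev C) (hy : y.toWord = C ++ M) (hxy : (x * y).toWord = L ++ M) :
    cancel x y = C.length := by
  simp only [cancel, FreeGroup.norm, hx, hy, hxy, List.length_append, invRev_length]
  omega

theorem length_le_cancel {x y : FreeGroup α} {D : List (α × Bool)}
    (hx : invRev D <:+ x.toWord) (hy : D <+: y.toWord) : D.length ≤ cancel x y := by
  obtain ⟨U, hU⟩ := hx
  obtain ⟨V, hV⟩ := hy
  have hxy : x * y = mk (U ++ V) := by
    rw [← mk_toWord (x := x), ← mk_toWord (x := y), ← hU, ← hV, ← mul_mk, ← mul_mk, ← mul_mk,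
      ← inv_mk, mul_assoc, inv_mul_cancel_left]
  have hnorm : FreeGroup.norm (x * y) ≤ U.length + V.length :=
    hxy ▸ norm_mk_le.trans_eq List.length_append
  simp only [cancel, FreeGroup.norm, ← hU, ← hV, List.length_append, invRev_length] at hnorm ⊢
  omega

theorem cancel_le_cancel_of_suffix {a b c : FreeGroup α} {S : List (α × Bool)}
    (ha : S <:+ a.toWord) (hb : S <:+ b.toWord) (h : cancel b c < S.length) :
    cancel a c ≤ cancel b c := by
  obtain ⟨L, C, M, hL, hC, hLM⟩ := exists_toWord_mul_eq a c
  have hCa : invRev C <:+ a.toWord := ⟨L, hL.symm⟩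
  have hCc : C <+: c.toWord := ⟨M, hC.symm⟩
  rw [cancel_eq_length hL hC hLM]
  rcases le_or_gt C.length S.length with hle | hlt
  · refine length_le_cancel ((List.suffix_of_suffix_length_le hCa ha ?_).trans hb) hCc
    rwa [invRev_length]
  · -- `S` lies in the cancelled part, so it would cancel against `c` after `b` as well
    have hSC : S <:+ invRev C :=
      List.suffix_of_suffix_length_le ha hCa (by rw [invRev_length]; omega)
    have hS : (invRev S).length ≤ cancel b c :=
      length_le_cancel (by rwa [invRev_invRev]) ((invRev_prefix_of_suffix_invRev hSC).trans hCc)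
    rw [invRev_length] at hS
    omega

theorem exists_suffix_toWord_mul (a b : FreeGroup α) :
    ∃ M, M <:+ (a * b).toWord ∧ M <:+ b.toWord ∧ cancel a b + M.length = FreeGroup.norm b := by
  obtain ⟨L, C, M, hL, hC, hLM⟩ := exists_toWord_mul_eq a b
  refine ⟨M, ⟨L, hLM.symm⟩, ⟨C, hC.symm⟩, ?_⟩
  rw [cancel_eq_length hL hC hLM, FreeGroup.norm, hC, List.length_append]

end Cancel

theorem bpow_inv {α : Type*} (w : FreeGroup α) (e : Bool) : (bpow w e)⁻¹ = bpow w !e := by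
  cases e <;> simp [bpow]

section Remnant

variable {α β : Type*} (η : FreeGroup α →* FreeGroup β)

def letterImage (x : α × Bool) : FreeGroup β := bpow (η (of x.1)) x.2

theorem letterImage_inv (x : α × Bool) : (letterImage η x)⁻¹ = letterImage η (x.1, !x.2) :=
  bpow_inv _ _

theorem map_mk_singleton (x : α × Bool) : η (mk [x]) = letterImage η x := by
  rcases x with ⟨i, _ | _⟩
  · change η (mk (invRev [(i, true)])) = _
    rw [← inv_mk, map_inv η]
    rfl
  · rfl

variable [Fintype α] [DecidableEq α] [DecidableEq β]

/- Inverting `η(gᵢ)` exchanges its two ends, so for a negative letter the roles of the maximal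
left and right cancellations of `gᵢ` are swapped. -/
def leftCancelBound (x : α × Bool) : ℕ :=
  if x.2 then maxLeftCancel η x.1 else maxRightCancel η x.1

def rightCancelBound (x : α × Bool) : ℕ :=
  if x.2 then maxRightCancel η x.1 else maxLeftCancel η x.1

theorem cancel_letterImage_le_maxLeftCancel {i : α} {z : α × Bool} (hz : z ≠ (i, false)) :
    cancel (letterImage η z) (η (of i)) ≤ maxLeftCancel η i :=
  Finset.le_sup (f := fun z : α × Bool => cancel (letterImage η z) (η (of i))) (by simpa using hz)

theorem cancel_letterImage_le_maxRightCancel {i : α} {z : α × Bool} (hz : z ≠ (i, false)) :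
    cancel (η (of i)) (letterImage η z) ≤ maxRightCancel η i :=
  Finset.le_sup (f := fun z : α × Bool => cancel (η (of i)) (letterImage η z)) (by simpa using hz)

variable {η}

theorem cancel_letterImage_le_rightCancelBound {x y : α × Bool} (hxy : y ≠ (x.1, !x.2)) :
    cancel (letterImage η x) (letterImage η y) ≤ rightCancelBound η x := by
  rcases x with ⟨i, _ | _⟩
  · rw [← cancel_inv_inv, letterImage_inv, letterImage_inv]
    refine cancel_letterImage_le_maxLeftCancel η ?_
    rcases y with ⟨j, _ | _⟩ <;> simp_all
  · exact cancel_letterImage_le_maxRightCancel η hxy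

theorem cancel_letterImage_le_leftCancelBound {x y : α × Bool} (hxy : y ≠ (x.1, !x.2)) :
    cancel (letterImage η x) (letterImage η y) ≤ leftCancelBound η y := by
  rcases y with ⟨j, _ | _⟩
  · rw [← cancel_inv_inv, letterImage_inv, letterImage_inv]
    refine cancel_letterImage_le_maxRightCancel η ?_
    rcases x with ⟨i, _ | _⟩ <;> simp_all [eq_comm]
  · refine cancel_letterImage_le_maxLeftCancel η ?_
    rcases x with ⟨i, _ | _⟩ <;> simp_all [eq_comm]

theorem HasRemnant.leftCancelBound_add_rightCancelBound_lt (h : HasRemnant η) (x : α × Bool) :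
    leftCancelBound η x + rightCancelBound η x < FreeGroup.norm (letterImage η x) := by
  rcases x with ⟨i, _ | _⟩
  · simpa [leftCancelBound, rightCancelBound, letterImage, bpow, norm_inv_eq, add_comm] using h i
  · simpa [leftCancelBound, rightCancelBound, letterImage, bpow] using h i

theorem HasRemnant.exists_suffix_map_mk (h : HasRemnant η) (w : List (α × Bool)) (x : α × Bool)
    (hw : IsReduced (w ++ [x])) :
    ∃ S, S <:+ (η (mk (w ++ [x]))).toWord ∧ S <:+ (letterImage η x).toWord ∧
      rightCancelBound η x < S.length := by
  induction w using List.reverseRecOn generalizing x with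
  | nil =>
    refine ⟨(letterImage η x).toWord, by rw [List.nil_append, map_mk_singleton],
      List.suffix_refl _, ?_⟩
    have := h.leftCancelBound_add_rightCancelBound_lt x
    rw [FreeGroup.norm] at this
    omega
  | append_singleton w y ih =>
    obtain ⟨S, hSw, hSy, hS⟩ := ih y (hw.infix (List.prefix_append _ _).isInfix)
    have hadj : x ≠ (y.1, !y.2) := by
      have := (isReduced_cons_cons.mp (hw.infix ⟨w, [], by simp⟩ : IsReduced [y, x])).1
      rintro rfl
      simp at this
    have hmul : η (mk (w ++ [y] ++ [x])) = η (mk (w ++ [y])) * letterImage η x := by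
      rw [← mul_mk, map_mul η, map_mk_singleton]
    obtain ⟨M, hMw, hMx, hM⟩ := exists_suffix_toWord_mul (η (mk (w ++ [y]))) (letterImage η x)
    have hyx := cancel_letterImage_le_rightCancelBound (η := η) hadj
    have hcancel := cancel_le_cancel_of_suffix hSw hSy (hyx.trans_lt hS)
    have hxy := cancel_letterImage_le_leftCancelBound (η := η) hadj
    have hrem := h.leftCancelBound_add_rightCancelBound_lt x
    exact ⟨M, hmul ▸ hMw, hMx, by omega⟩

theorem HasRemnant.injective (h : HasRemnant η) : Function.Injective η := by
  refine (injective_iff_map_eq_one η).mpr fun g hg => ?_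
  by_contra hne
  obtain ⟨w, x, hwx⟩ :=
    (List.eq_nil_or_concat' g.toWord).resolve_left (mt toWord_eq_nil_iff.mp hne)
  obtain ⟨S, hS, -, hlen⟩ := h.exists_suffix_map_mk w x (hwx ▸ isReduced_toWord)
  rw [← hwx, mk_toWord, hg, toWord_one, List.suffix_nil] at hS
  simp [hS] at hlen

end Remnant

theorem prodHom_comp_map_inl {α β : Type*} (φ ψ : FreeGroup α →* FreeGroup β) :
    (prodHom φ ψ).comp (map Sum.inl) = φ :=
  ext_hom _ _ fun a => by simp [prodHom]

theorem prodHom_comp_map_inr {α β : Type*} (φ ψ : FreeGroup α →* FreeGroup β) :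
    (prodHom φ ψ).comp (map Sum.inr) = ψ :=
  ext_hom _ _ fun a => by simp [prodHom]

/-- If `φ ∗ ψ : G ∗ G → H` has remnant, then `Eq(φ, ψ)` is trivial. -/
theorem equalizer_eq_bot_of_hasRemnant {n : ℕ} {β : Type*} [DecidableEq β]
    (φ ψ : FreeGroup (Fin n) →* FreeGroup β)
    (h : HasRemnant (prodHom φ ψ)) :
    eqSubgroup φ ψ = ⊥ := by
  refine (Subgroup.eq_bot_iff_forall _).mpr fun g (hg : φ g = ψ g) => ?_
  refine eq_one_of_map_inl_eq_map_inr (g' := g) (h.injective ?_)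
  rw [← MonoidHom.comp_apply, ← MonoidHom.comp_apply, prodHom_comp_map_inl,
    prodHom_comp_map_inr, hg]
end

section
/- Let G be a free group with basis g₁, …, g_n with n ≥ 1, let φ : G → G be any endomorphism, and let v ∈ G. Then the homomorphism φ^v ∗ id : G ∗ G → G, where φ^v(g) = v⁻¹ φ(g) v and id is the identity homomorphism of G, does not have remnant. -/
/-! Basic definitions: cancellation in products of reduced words, remnant
of a homomorphism of free groups, and assorted constructions. -/

open FreeGroup

/-! The second factor maps each generator `gᵢ` to the one-letter word `gᵢ`, so it has remnant
only if no letter of it ever cancels. Now `w = φᵛ(g₁)` is nontrivial (otherwise `g₁` of the first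
factor has empty remnant), so its reduced word begins with some `gᵢ^{±1}`. If it begins with
`gᵢ⁻¹`, the letter `gᵢ` cancels on the right in `gᵢ * w`; if it begins with `gᵢ`, it cancels
on the left in `w⁻¹ * gᵢ`. -/

namespace FreeGroup

theorem bpow_of {α : Type*} (a : α) (e : Bool) : bpow (of a) e = mk [(a, e)] := by
  cases e <;> rfl

variable {α : Type*} [DecidableEq α]

theorem norm_mk_singleton_mul_of_toWord_eq_cons {w : FreeGroup α} {a : α} {b : Bool}
    {t : List (α × Bool)} (hw : w.toWord = (a, b) :: t) :
    norm (mk [(a, !b)] * w) + 1 = norm w := by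
  have hsplit : w = mk [(a, b)] * mk t := by
    rw [← mk_toWord (x := w), hw, mul_mk, List.singleton_append]
  have hcancel : mk [(a, !b)] * w = mk t := by
    rw [hsplit, show mk [(a, !b)] = (mk [(a, b)])⁻¹ by simp [inv_mk, invRev],
      inv_mul_cancel_left]
  have ht : IsReduced t :=
    isReduced_toWord.infix (hw ▸ List.suffix_cons _ _ : t <:+ w.toWord).isInfix
  rw [hcancel, norm, norm, toWord_mk, ht.reduce_eq, hw, List.length_cons]

theorem exists_norm_bpow_of_mul {w : FreeGroup α} (hw : w ≠ 1) :
    ∃ a e, norm (bpow (of a) e * w) + 1 = norm w := by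
  obtain ⟨⟨a, b⟩, t, ht⟩ : ∃ x t, w.toWord = x :: t :=
    List.exists_cons_of_ne_nil (mt toWord_eq_nil_iff.mp hw)
  exact ⟨a, !b, by rw [bpow_of]; exact norm_mk_singleton_mul_of_toWord_eq_cons ht⟩

theorem cancel_eq_one_of_norm_mul {x y : FreeGroup α} (h : norm (x * y) + 2 = norm x + norm y) :
    cancel x y = 1 := by
  unfold cancel
  omega

end FreeGroup

open FreeGroup

section Remnant

variable {α β : Type*} [Fintype α] [DecidableEq α] [DecidableEq β]
  (η : FreeGroup α →* FreeGroup β)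

theorem le_maxLeftCancel {i j : α} {e : Bool} (h : (j, e) ≠ (i, false)) :
    cancel (bpow (η (of j)) e) (η (of i)) ≤ maxLeftCancel η i :=
  Finset.le_sup (f := fun je : α × Bool => cancel (bpow (η (of je.1)) je.2) (η (of i)))
    (b := (j, e)) (Finset.mem_filter.2 ⟨Finset.mem_univ _, h⟩)

theorem le_maxRightCancel {i j : α} {e : Bool} (h : (j, e) ≠ (i, false)) :
    cancel (η (of i)) (bpow (η (of j)) e) ≤ maxRightCancel η i :=
  Finset.le_sup (f := fun je : α × Bool => cancel (η (of i)) (bpow (η (of je.1)) je.2))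
    (b := (j, e)) (Finset.mem_filter.2 ⟨Finset.mem_univ _, h⟩)

theorem HasRemnant.map_of_ne_one {η : FreeGroup α →* FreeGroup β} (h : HasRemnant η) (i : α) :
    η (of i) ≠ 1 := by
  intro h1
  have hrem := h i
  rw [h1, FreeGroup.norm_one] at hrem
  omega

/-- `η (of a)` has length one, so a single letter cancelled on either side leaves no remnant. -/
theorem not_hasRemnant_of_map_of_eq_of {a c : α} {b : β} {e : Bool} (hac : a ≠ c)
    (ha : η (of a) = of b) (hc : norm (bpow (of b) e * η (of c)) + 1 = norm (η (of c))) :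
    ¬ HasRemnant η := by
  intro h
  have hrem := h a
  rw [ha, norm_of] at hrem
  cases e with
  | true =>
    change norm (of b * η (of c)) + 1 = _ at hc
    have hle := le_maxRightCancel η (i := a) (j := c) (e := true) (by simp [hac.symm])
    change cancel (η (of a)) (η (of c)) ≤ _ at hle
    rw [ha, cancel_eq_one_of_norm_mul (by rw [norm_of]; omega)] at hle
    omega
  | false =>
    change norm ((of b)⁻¹ * η (of c)) + 1 = _ at hc
    have hinv : norm ((η (of c))⁻¹ * of b) + 1 = norm ((η (of c))⁻¹) := by
      rwa [← norm_inv_eq, mul_inv_rev, inv_inv, norm_inv_eq]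
    have hle := le_maxLeftCancel η (i := a) (j := c) (e := false) (by simp [hac.symm])
    change cancel (η (of c))⁻¹ (η (of a)) ≤ _ at hle
    rw [ha, cancel_eq_one_of_norm_mul (by rw [norm_of]; omega)] at hle
    omega

end Remnant

@[simp]
theorem prodHom_of_inr {α β : Type*} (φ ψ : FreeGroup α →* FreeGroup β) (i : α) :
    prodHom φ ψ (of (Sum.inr i)) = ψ (of i) := by
  simp [prodHom]

/-- For any endomorphism `φ` of the free group `G` of rank `n ≥ 1` and
any `v ∈ G`, the homomorphism `φᵛ ∗ id : G ∗ G → G` never has remnant. -/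
theorem not_hasRemnant_conj_id {n : ℕ} (hn : 1 ≤ n)
    (φ : FreeGroup (Fin n) →* FreeGroup (Fin n)) (v : FreeGroup (Fin n)) :
    ¬ HasRemnant (prodHom (conjHom φ v) (MonoidHom.id (FreeGroup (Fin n)))) := by
  intro h
  obtain ⟨i, e, hcancel⟩ := exists_norm_bpow_of_mul (h.map_of_ne_one (Sum.inl ⟨0, hn⟩))
  exact not_hasRemnant_of_map_of_eq_of _ Sum.inr_ne_inl (prodHom_of_inr _ _ i) hcancel h
end
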